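/- arXiv:2004.04770 — 5 statements merged into one kernel-verified Lean document; each statement's English description precedes it below -/
import Mathlib

section
/- Let m ≥ 1 and let A : ℝ → Matrix (Fin (2m)) (Fin (2m)) ℝ be a family of symmetric matrices each of whose entries is differentiable at a point θ₀. Then the function θ ↦ Haf(A(θ)) is differentiable at θ₀ and its derivative equals (1/2) · Σ_{i ≠ j} (A'(θ₀))_{ij} · Haf(A(θ₀)_{−i−j}), where the sum runs over all ordered pairs of distinct indices i, j ∈ {1,…,2m} and A'(θ₀) is the entrywise derivative of A at θ₀. -/
/-!
Differentiating the sum over perfect matchings term by term, each pair `{k, σ k}` of a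
matching `σ` contributes `A'_{k, σ k}` times the product of the entries on the other pairs of
`σ`. Grouping these contributions by the pair `{i, j}`: restricting to the complement of
`{i, j}` is a bijection from the perfect matchings containing `{i, j}` onto the perfect
matchings of the complement, so the coefficient of `A'_{ij}` is `Haf(A_{−i−j})`. Since `A'`
and `(i, j) ↦ Haf(A_{−i−j})` are symmetric, the sum over pairs `i < j` is half the sum over
ordered pairs `i ≠ j`.
-/

open Finset Matrix

open scoped Classical in
/-- The hafnian of a matrix: the sum over all perfect matchings of the index set
(encoded as fixed-point-free involutions `σ`), of the product of the entries
`A i (σ i)` over the pairs `{i, σ i}` (each pair taken once, via `i < σ i`).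
For an empty index type this is `1`, and for an odd-cardinality index type it is `0`. -/
noncomputable def hafnian {ι : Type*} [Fintype ι] [LinearOrder ι] {R : Type*} [CommRing R]
    (A : Matrix ι ι R) : R :=
  ∑ σ ∈ Finset.univ.filter
      (fun σ : Equiv.Perm ι => σ * σ = 1 ∧ ∀ i, σ i ≠ i),
    ∏ i ∈ Finset.univ.filter (fun i => i < σ i), A i (σ i)

/-- `A_{−i−j}`: the matrix obtained from `A` by deleting rows `i, j` and columns `i, j`. -/
def delTwo {ι : Type*} {R : Type*} (A : Matrix ι ι R) (i j : ι) :
    Matrix {k : ι // k ≠ i ∧ k ≠ j} {k : ι // k ≠ i ∧ k ≠ j} R :=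
  A.submatrix Subtype.val Subtype.val

open Equiv Equiv.Perm

section PerfectMatchings

variable {ι : Type*} [Fintype ι]

variable (ι) in
def perfectMatchings [DecidableEq ι] : Finset (Perm ι) :=
  {σ | σ * σ = 1 ∧ ∀ i, σ i ≠ i}

/-- The pairs `{i, σ i}` of a matching `σ`, each represented by its smaller element. -/
def arcs [LinearOrder ι] (σ : Perm ι) : Finset ι :=
  {i | i < σ i}

theorem mem_perfectMatchings [DecidableEq ι] {σ : Perm ι} :
    σ ∈ perfectMatchings ι ↔ Function.Involutive σ ∧ ∀ i, σ i ≠ i := by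
  simp [perfectMatchings, Perm.ext_iff, Function.Involutive]

theorem hafnian_eq_sum_perfectMatchings [LinearOrder ι] {R : Type*} [CommRing R]
    (A : Matrix ι ι R) :
    hafnian A = ∑ σ ∈ perfectMatchings ι, ∏ i ∈ arcs σ, A i (σ i) :=
  rfl

end PerfectMatchings

section DeletePair

variable {ι : Type*} {σ : Perm ι} {i j : ι}

theorem Function.Involutive.ne_and_ne_iff (hσ : Function.Involutive σ) (hσij : σ i = j)
    (k : ι) :
    (σ k ≠ i ∧ σ k ≠ j) ↔ (k ≠ i ∧ k ≠ j) := by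
  have hσji : σ j = i := hσij ▸ hσ i
  simp only [ne_eq, hσ.eq_iff, hσij, hσji, and_comm]

def Function.Involutive.restrictComplPair (hσ : Function.Involutive σ) (hσij : σ i = j) :
    Perm {k // k ≠ i ∧ k ≠ j} :=
  σ.subtypePerm (p := fun k => k ≠ i ∧ k ≠ j) (hσ.ne_and_ne_iff hσij)

@[simp]
theorem Function.Involutive.restrictComplPair_apply (hσ : Function.Involutive σ) (hσij : σ i = j)
    (k : {k // k ≠ i ∧ k ≠ j}) : (hσ.restrictComplPair hσij k : ι) = σ k :=
  rfl

variable [DecidableEq ι]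

theorem swap_mul_ofSubtype_apply (τ : Perm {k // k ≠ i ∧ k ≠ j}) (k : ι) :
    (Equiv.swap i j * ofSubtype τ) k =
      if h : k ≠ i ∧ k ≠ j then (τ ⟨k, h⟩ : ι) else Equiv.swap i j k := by
  split_ifs with h
  · rw [Perm.mul_apply, ofSubtype_apply_of_mem τ h]
    exact swap_apply_of_ne_of_ne (τ ⟨k, h⟩).2.1 (τ ⟨k, h⟩).2.2
  · rw [Perm.mul_apply, ofSubtype_apply_of_not_mem τ h]

theorem swap_mul_ofSubtype_apply_left (τ : Perm {k // k ≠ i ∧ k ≠ j}) :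
    (Equiv.swap i j * ofSubtype τ) i = j := by
  simp [swap_mul_ofSubtype_apply]

theorem involutive_swap_mul_ofSubtype {τ : Perm {k // k ≠ i ∧ k ≠ j}}
    (hτ : Function.Involutive τ) :
    Function.Involutive (Equiv.swap i j * ofSubtype τ) := by
  intro k
  by_cases h : k ≠ i ∧ k ≠ j
  · simp [swap_mul_ofSubtype_apply, h, (τ ⟨k, h⟩).2, hτ _]
  · obtain rfl | rfl : k = i ∨ k = j := by tauto
    all_goals simp [swap_mul_ofSubtype_apply]

theorem swap_mul_ofSubtype_apply_ne {τ : Perm {k // k ≠ i ∧ k ≠ j}} (hij : i ≠ j)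
    (hτ : ∀ x, τ x ≠ x) (k : ι) : (Equiv.swap i j * ofSubtype τ) k ≠ k := by
  by_cases h : k ≠ i ∧ k ≠ j
  · simpa [swap_mul_ofSubtype_apply, h, Subtype.ext_iff] using hτ ⟨k, h⟩
  · obtain rfl | rfl : k = i ∨ k = j := by tauto
    all_goals simp [swap_mul_ofSubtype_apply, hij, hij.symm]

theorem swap_mul_ofSubtype_restrictComplPair (hσ : Function.Involutive σ) (hσij : σ i = j) :
    Equiv.swap i j * ofSubtype (hσ.restrictComplPair hσij) = σ := by
  ext k
  by_cases h : k ≠ i ∧ k ≠ j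
  · simp [swap_mul_ofSubtype_apply, h]
  · have hσji : σ j = i := hσij ▸ hσ i
    obtain rfl | rfl : k = i ∨ k = j := by tauto
    all_goals simp [swap_mul_ofSubtype_apply, hσij, hσji]

theorem subtypePerm_swap_mul_ofSubtype (τ : Perm {k // k ≠ i ∧ k ≠ j})
    (h : ∀ k, (Equiv.swap i j * ofSubtype τ) k ≠ i ∧ (Equiv.swap i j * ofSubtype τ) k ≠ j ↔
      k ≠ i ∧ k ≠ j) :
    (Equiv.swap i j * ofSubtype τ).subtypePerm h = τ := by
  ext ⟨k, hk⟩
  simp [swap_mul_ofSubtype_apply, hk]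

end DeletePair

section ExpandAlongPair

variable {ι : Type*} [Fintype ι] [LinearOrder ι] {σ : Perm ι} {i j : ι}

theorem arcs_restrictComplPair (hσ : Function.Involutive σ) (hσij : σ i = j) :
    arcs (hσ.restrictComplPair hσij) = ((arcs σ).erase i).subtype (fun k => k ≠ i ∧ k ≠ j) := by
  ext ⟨k, hki, hkj⟩
  simp [arcs, hki, ← Subtype.coe_lt_coe]

theorem prod_erase_arcs_eq_prod_arcs_restrictComplPair {M : Type*} [CommMonoid M]
    (hσ : Function.Involutive σ) (hσij : σ i = j) (hij : i < j) (f : ι → ι → M) :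
    ∏ k ∈ (arcs σ).erase i, f k (σ k) =
      ∏ k ∈ arcs (hσ.restrictComplPair hσij), f k (hσ.restrictComplPair hσij k) := by
  have hσji : σ j = i := hσij ▸ hσ i
  rw [arcs_restrictComplPair]
  refine (prod_subtype_of_mem (fun k => f k (σ k)) ?_).symm
  rintro k hk
  simp only [mem_erase, arcs, mem_filter, mem_univ, true_and] at hk
  refine ⟨hk.1, ?_⟩
  rintro rfl
  exact hk.2.not_gt (hσji ▸ hij)

theorem sum_filter_perfectMatchings_eq_hafnian_delTwo {R : Type*} [CommRing R] (A : Matrix ι ι R)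
    (hij : i < j) :
    ∑ σ ∈ perfectMatchings ι with σ i = j, ∏ k ∈ (arcs σ).erase i, A k (σ k) =
      hafnian (delTwo A i j) := by
  rw [hafnian_eq_sum_perfectMatchings]
  have hmem {σ} (hσ : σ ∈ {σ ∈ perfectMatchings ι | σ i = j}) :
      Function.Involutive σ ∧ (∀ k, σ k ≠ k) ∧ σ i = j := by
    simpa only [mem_filter, mem_perfectMatchings, and_assoc] using hσ
  refine sum_bij' (fun σ hσ => (hmem hσ).1.restrictComplPair (hmem hσ).2.2)
    (fun τ _ => Equiv.swap i j * ofSubtype τ) (fun σ hσ => ?_) (fun τ hτ => ?_)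
    (fun _ _ => swap_mul_ofSubtype_restrictComplPair _ _)
    (fun τ _ => subtypePerm_swap_mul_ofSubtype τ _)
    (fun _ _ => prod_erase_arcs_eq_prod_arcs_restrictComplPair _ _ hij A)
  · obtain ⟨hinv, hfree, -⟩ := hmem hσ
    rw [mem_perfectMatchings]
    exact ⟨fun k => Subtype.ext (hinv k), fun k h => hfree k (congrArg Subtype.val h)⟩
  · obtain ⟨hinv, hfree⟩ := mem_perfectMatchings.mp hτ
    simp only [mem_filter, mem_perfectMatchings]
    exact ⟨⟨involutive_swap_mul_ofSubtype hinv, swap_mul_ofSubtype_apply_ne hij.ne hfree⟩,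
      swap_mul_ofSubtype_apply_left τ⟩

end ExpandAlongPair

section Derivative

variable {ι : Type*} [Fintype ι] [LinearOrder ι]

theorem sum_sum_lt_sum_filter_apply_eq_sum_arcs {M : Type*} [AddCommMonoid M] (s : Finset (Perm ι))
    (g : ι → ι → Perm ι → M) :
    ∑ i, ∑ j with i < j, ∑ σ ∈ s with σ i = j, g i j σ = ∑ σ ∈ s, ∑ i ∈ arcs σ, g i (σ i) σ := by
  calc ∑ i, ∑ j with i < j, ∑ σ ∈ s with σ i = j, g i j σ
      = ∑ i, ∑ σ ∈ s, ∑ j with i < j, if σ i = j then g i j σ else 0 := by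
        refine sum_congr rfl fun i _ => ?_
        simp only [sum_filter (s := s)]
        exact sum_comm
    _ = ∑ σ ∈ s, ∑ i ∈ arcs σ, g i (σ i) σ := by
        simp only [sum_ite_eq, mem_filter, mem_univ, true_and, arcs, sum_filter]
        exact sum_comm

variable {𝕜 𝔸 : Type*} [NontriviallyNormedField 𝕜] [NormedCommRing 𝔸] [NormedAlgebra 𝕜 𝔸]

theorem hasDerivAt_hafnian_sum_perfectMatchings (A : 𝕜 → Matrix ι ι 𝔸) (A' : Matrix ι ι 𝔸)
    (x : 𝕜) (hA : ∀ i j, HasDerivAt (fun θ => A θ i j) (A' i j) x) :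
    HasDerivAt (fun θ => hafnian (A θ))
      (∑ σ ∈ perfectMatchings ι, ∑ k ∈ arcs σ,
        (∏ l ∈ (arcs σ).erase k, A x l (σ l)) * A' k (σ k)) x := by
  simp only [hafnian_eq_sum_perfectMatchings, ← smul_eq_mul]
  exact HasDerivAt.fun_sum fun σ _ => HasDerivAt.fun_finsetProd fun k _ => hA k (σ k)

theorem hasDerivAt_hafnian_sum_lt (A : 𝕜 → Matrix ι ι 𝔸) (A' : Matrix ι ι 𝔸)
    (x : 𝕜) (hA : ∀ i j, HasDerivAt (fun θ => A θ i j) (A' i j) x) :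
    HasDerivAt (fun θ => hafnian (A θ))
      (∑ i, ∑ j with i < j, A' i j * hafnian (delTwo (A x) i j)) x := by
  convert hasDerivAt_hafnian_sum_perfectMatchings A A' x hA using 1
  calc ∑ i, ∑ j with i < j, A' i j * hafnian (delTwo (A x) i j)
      = ∑ i, ∑ j with i < j, ∑ σ ∈ perfectMatchings ι with σ i = j,
          A' i j * ∏ k ∈ (arcs σ).erase i, A x k (σ k) := by
        refine sum_congr rfl fun i _ => sum_congr rfl fun j hj => ?_
        rw [← sum_filter_perfectMatchings_eq_hafnian_delTwo _ (mem_filter.mp hj).2, mul_sum]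
    _ = _ := by
        rw [sum_sum_lt_sum_filter_apply_eq_sum_arcs]
        simp only [mul_comm]

end Derivative

section Symmetry

variable {ι κ R : Type*} [Fintype ι] [LinearOrder ι] [Fintype κ] [LinearOrder κ] [CommRing R]

theorem hafnian_submatrix_orderIso (e : ι ≃o κ) (A : Matrix κ κ R) :
    hafnian (A.submatrix e e) = hafnian A := by
  simp only [hafnian_eq_sum_perfectMatchings]
  refine sum_equiv e.toEquiv.permCongr (fun σ => ?_) (fun σ _ => ?_)
  · simp [mem_perfectMatchings, Function.Involutive, permCongr_apply, e.surjective.forall]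
  · refine prod_equiv e.toEquiv (fun k => ?_) (fun k _ => ?_)
    · simp only [arcs, mem_filter, mem_univ, true_and]
      simp [permCongr_apply]
    · simp [permCongr_apply]

theorem hafnian_delTwo_comm (A : Matrix ι ι R) (i j : ι) :
    hafnian (delTwo A j i) = hafnian (delTwo A i j) :=
  let e : {k // k ≠ j ∧ k ≠ i} ≃o {k // k ≠ i ∧ k ≠ j} :=
    { toEquiv := Equiv.subtypeEquivRight fun _ => and_comm, map_rel_iff' := Iff.rfl }
  hafnian_submatrix_orderIso e (delTwo A i j)

end Symmetry

theorem Finset.sum_sum_ne_eq_two_nsmul {ι M : Type*} [Fintype ι] [LinearOrder ι]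
    [AddCommMonoid M]
    (f : ι → ι → M) (hf : ∀ i j, f i j = f j i) :
    ∑ i, ∑ j with j ≠ i, f i j = 2 • ∑ i, ∑ j with i < j, f i j := by
  have hsplit (i j : ι) : (if j ≠ i then f i j else 0) =
      (if i < j then f i j else 0) + if j < i then f i j else 0 := by
    rcases lt_trichotomy i j with h | rfl | h
    · simp [h, h.ne', h.not_gt]
    · simp
    · simp [h, h.ne, h.not_gt]
  have hswap : ∑ i, ∑ j with j < i, f i j = ∑ i, ∑ j with i < j, f i j := by
    simp only [sum_filter]
    rw [sum_comm]
    simp only [hf]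
  simp only [sum_filter] at hswap ⊢
  simp only [hsplit, sum_add_distrib, hswap, two_nsmul]

theorem Matrix.isSymm_of_hasDerivAt {ι 𝕜 F : Type*} [NontriviallyNormedField 𝕜]
    [NormedAddCommGroup F] [NormedSpace 𝕜 F] {A : 𝕜 → Matrix ι ι F} {A' : Matrix ι ι F} {x : 𝕜}
    (hsymm : ∀ θ, (A θ).IsSymm) (hA : ∀ i j, HasDerivAt (fun θ => A θ i j) (A' i j) x) :
    A'.IsSymm :=
  IsSymm.ext fun i j => (hA j i).unique (by simpa only [(hsymm _).apply] using hA i j)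

theorem hasDerivAt_hafnian_general {m : ℕ}
    (A : ℝ → Matrix (Fin (2 * m)) (Fin (2 * m)) ℝ)
    (A' : Matrix (Fin (2 * m)) (Fin (2 * m)) ℝ) (θ₀ : ℝ)
    (hsymm : ∀ θ, (A θ).IsSymm)
    (hdiff : ∀ i j, HasDerivAt (fun θ => A θ i j) (A' i j) θ₀) :
    HasDerivAt (fun θ => hafnian (A θ))
      ((1 / 2) * ∑ i, ∑ j ∈ Finset.univ.filter (fun j => j ≠ i),
        A' i j * hafnian (delTwo (A θ₀) i j)) θ₀ := by
  have hA' := isSymm_of_hasDerivAt hsymm hdiff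
  refine (hasDerivAt_hafnian_sum_lt A A' θ₀ hdiff).congr_deriv ?_
  rw [sum_sum_ne_eq_two_nsmul _ fun i j => by rw [hA'.apply, hafnian_delTwo_comm], two_nsmul]
  ring

/-- the derivative of `θ ↦ Haf (A θ)` for a family of symmetric `2m × 2m`
real matrices with entrywise derivative `A'` at `θ₀` is
`(1/2) · Σ_{i ≠ j} (A')_{ij} · Haf (A(θ₀)_{−i−j})`. -/
theorem hasDerivAt_hafnian {m : ℕ} (hm : 1 ≤ m)
    (A : ℝ → Matrix (Fin (2 * m)) (Fin (2 * m)) ℝ)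
    (A' : Matrix (Fin (2 * m)) (Fin (2 * m)) ℝ) (θ₀ : ℝ)
    (hsymm : ∀ θ, (A θ).IsSymm)
    (hdiff : ∀ i j, HasDerivAt (fun θ => A θ i j) (A' i j) θ₀) :
    HasDerivAt (fun θ => hafnian (A θ))
      ((1 / 2) * ∑ i, ∑ j ∈ Finset.univ.filter (fun j => j ≠ i),
        A' i j * hafnian (delTwo (A θ₀) i j)) θ₀ :=
  hasDerivAt_hafnian_general A A' θ₀ hsymm hdiff
end

section
/- Let 𝒜 : ℝ → Matrix (Fin (2m)) (Fin (2m)) ℝ be a family of matrices whose entries are differentiable at θ₀, let X be the 2m×2m block matrix [[0, I_m], [I_m, 0]], and suppose that X − 𝒜(θ₀) is invertible and det(I − X·𝒜(θ)) > 0 on a neighborhood of θ₀. Then the function θ ↦ (det(I − X·𝒜(θ)))^{1/2} is differentiable at θ₀, with derivative −(1/2) · (det(I − X·𝒜(θ₀)))^{1/2} · Tr[(X − 𝒜(θ₀))^{-1} · 𝒜'(θ₀)], where 𝒜'(θ₀) is the entrywise derivative. -/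
/-! Since `X² = 1`, we have `I − X𝒜 = X (X − 𝒜)`, hence `(I − X𝒜)⁻¹ X = (X − 𝒜)⁻¹`. Jacobi's
formula `(det B)' = det B · Tr (B⁻¹ B')` for `B = I − X𝒜`, `B' = −X𝒜'`, followed by the chain
rule for `√`, gives the derivative. Jacobi's formula comes from differentiating `det` as a
multilinear function of the rows: the derivative is `∑ᵢ det (B with row i replaced by B'ᵢ)`,
and expanding each term along row `i` gives `Tr (adj B · B')`. -/

open Finset Matrix

/-- The `2m × 2m` block matrix `X = [[0, I_m], [I_m, 0]]` that swaps the two blocks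
of indices. -/
def Xswap (m : ℕ) : Matrix (Fin (2 * m)) (Fin (2 * m)) ℝ :=
  Matrix.of fun i j => if (i : ℕ) = (j : ℕ) + m ∨ (j : ℕ) = (i : ℕ) + m then 1 else 0

namespace Matrix

section CommRing

variable {R ι : Type*} [CommRing R] [Fintype ι] [DecidableEq ι]

theorem det_updateRow_eq_sum_adjugate_mul (A : Matrix ι ι R) (i : ι) (v : ι → R) :
    (A.updateRow i v).det = ∑ j, adjugate A j i * v j := by
  rw [← cramer_transpose_apply, cramer_eq_adjugate_mulVec, ← adjugate_transpose]
  rfl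

theorem adjugate_eq_det_smul_inv {A : Matrix ι ι R} (h : IsUnit A.det) :
    adjugate A = A.det • A⁻¹ := by
  rw [inv_def, smul_smul, Ring.mul_inverse_cancel _ h, one_smul]

theorem inv_one_sub_mul_mul {X : Matrix ι ι R} (hX : X * X = 1) (A C : Matrix ι ι R) :
    (1 - X * A)⁻¹ * (X * C) = (X - A)⁻¹ * C := by
  rw [← hX, ← mul_sub, mul_inv_rev, inv_eq_right_inv hX, mul_assoc, ← mul_assoc X, hX, one_mul]

end CommRing

variable {𝕜 ι : Type*} [NontriviallyNormedField 𝕜] [Fintype ι] [DecidableEq ι]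

noncomputable def detContinuousMultilinear :
    ContinuousMultilinearMap 𝕜 (fun _ : ι => ι → 𝕜) 𝕜 :=
  { (detRowAlternating : (ι → 𝕜) [⋀^ι]→ₗ[𝕜] 𝕜).toMultilinearMap with
    cont := continuous_id.matrix_det }

theorem hasDerivAt_det {A : 𝕜 → Matrix ι ι 𝕜} {A' : Matrix ι ι 𝕜} {θ₀ : 𝕜}
    (h : ∀ i j, HasDerivAt (fun θ => A θ i j) (A' i j) θ₀) :
    HasDerivAt (fun θ => (A θ).det) (trace (adjugate (A θ₀) * A')) θ₀ := by
  have hA : HasDerivAt (fun θ => (A θ : ι → ι → 𝕜)) A' θ₀ :=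
    hasDerivAt_pi.2 fun i => hasDerivAt_pi.2 (h i)
  refine ((detContinuousMultilinear.hasFDerivAt (A θ₀)).comp_hasDerivAt θ₀ hA).congr_deriv ?_
  refine (ContinuousMultilinearMap.linearDeriv_apply _ _ _).trans ?_
  simp_rw [trace, diag, mul_apply]
  rw [Finset.sum_comm]
  exact Finset.sum_congr rfl fun i _ => det_updateRow_eq_sum_adjugate_mul _ i _

theorem hasDerivAt_det_of_isUnit {A : 𝕜 → Matrix ι ι 𝕜} {A' : Matrix ι ι 𝕜} {θ₀ : 𝕜}
    (h : ∀ i j, HasDerivAt (fun θ => A θ i j) (A' i j) θ₀) (hA : IsUnit (A θ₀).det) :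
    HasDerivAt (fun θ => (A θ).det) ((A θ₀).det * trace ((A θ₀)⁻¹ * A')) θ₀ := by
  simpa [adjugate_eq_det_smul_inv hA] using hasDerivAt_det h

theorem hasDerivAt_one_sub_mul_apply (X : Matrix ι ι 𝕜) {A : 𝕜 → Matrix ι ι 𝕜}
    {A' : Matrix ι ι 𝕜} {θ₀ : 𝕜} (h : ∀ i j, HasDerivAt (fun θ => A θ i j) (A' i j) θ₀)
    (i j : ι) : HasDerivAt (fun θ => (1 - X * A θ) i j) ((-(X * A')) i j) θ₀ := by
  simp only [sub_apply, neg_apply, mul_apply]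
  exact (HasDerivAt.fun_sum fun k _ => (h k j).const_mul (X i k)).const_sub _

end Matrix

def swapHalves (m : ℕ) (i : Fin (2 * m)) : Fin (2 * m) :=
  ⟨if (i : ℕ) < m then i + m else i - m, by split <;> omega⟩

theorem swapHalves_involutive (m : ℕ) : Function.Involutive (swapHalves m) := by
  intro i
  simp only [swapHalves, Fin.ext_iff]
  split_ifs <;> omega

theorem Xswap_eq_permMatrix (m : ℕ) :
    Xswap m = (swapHalves_involutive m).toPerm.permMatrix ℝ := by
  ext i j
  simp only [Xswap, of_apply, PEquiv.toMatrix_apply, Equiv.toPEquiv_apply, Option.mem_def,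
    Option.some.injEq, Function.Involutive.coe_toPerm, swapHalves, Fin.ext_iff]
  exact if_congr (by split_ifs <;> omega) rfl rfl

theorem Xswap_mul_self (m : ℕ) : Xswap m * Xswap m = 1 := by
  have h : (swapHalves_involutive m).toPerm * (swapHalves_involutive m).toPerm = 1 :=
    Equiv.ext (swapHalves_involutive m)
  rw [Xswap_eq_permMatrix, ← permMatrix_mul, h, permMatrix_one]

theorem hasDerivAt_sqrt_det_general {m : ℕ}
    (𝒜 : ℝ → Matrix (Fin (2 * m)) (Fin (2 * m)) ℝ)
    (𝒜' : Matrix (Fin (2 * m)) (Fin (2 * m)) ℝ) (θ₀ : ℝ)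
    (hdiff : ∀ i j, HasDerivAt (fun θ => 𝒜 θ i j) (𝒜' i j) θ₀)
    (hpos : ∀ᶠ θ in nhds θ₀, 0 < (1 - Xswap m * 𝒜 θ).det) :
    HasDerivAt (fun θ => Real.sqrt (1 - Xswap m * 𝒜 θ).det)
      (-(1 / 2) * Real.sqrt (1 - Xswap m * 𝒜 θ₀).det *
        Matrix.trace ((Xswap m - 𝒜 θ₀)⁻¹ * 𝒜')) θ₀ := by
  have hd : 0 < (1 - Xswap m * 𝒜 θ₀).det := hpos.self_of_nhds
  have hdet := hasDerivAt_det_of_isUnit (hasDerivAt_one_sub_mul_apply (Xswap m) hdiff)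
    hd.ne'.isUnit
  rw [mul_neg, trace_neg, inv_one_sub_mul_mul (Xswap_mul_self m)] at hdet
  convert hdet.sqrt hd.ne' using 1
  field_simp
  rw [Real.sq_sqrt hd.le]
  ring

/-- for a family `𝒜` of `2m × 2m` real matrices with entrywise derivative `𝒜'`
at `θ₀`, with `X − 𝒜(θ₀)` invertible and `det(I − X·𝒜(θ)) > 0` near `θ₀`, the map
`θ ↦ det(I − X·𝒜(θ))^{1/2}` is differentiable at `θ₀` with derivative
`−(1/2) · det(I − X·𝒜(θ₀))^{1/2} · Tr[(X − 𝒜(θ₀))⁻¹ · 𝒜'(θ₀)]`. -/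
theorem hasDerivAt_sqrt_det {m : ℕ}
    (𝒜 : ℝ → Matrix (Fin (2 * m)) (Fin (2 * m)) ℝ)
    (𝒜' : Matrix (Fin (2 * m)) (Fin (2 * m)) ℝ) (θ₀ : ℝ)
    (hdiff : ∀ i j, HasDerivAt (fun θ => 𝒜 θ i j) (𝒜' i j) θ₀)
    (hinv : IsUnit (Xswap m - 𝒜 θ₀))
    (hpos : ∀ᶠ θ in nhds θ₀, 0 < (1 - Xswap m * 𝒜 θ).det) :
    HasDerivAt (fun θ => Real.sqrt (1 - Xswap m * 𝒜 θ).det)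
      (-(1 / 2) * Real.sqrt (1 - Xswap m * 𝒜 θ₀).det *
        Matrix.trace ((Xswap m - 𝒜 θ₀)⁻¹ * 𝒜')) θ₀ :=
  hasDerivAt_sqrt_det_general 𝒜 𝒜' θ₀ hdiff hpos
end

section
/- Let A be a fixed real symmetric m×m matrix, and for w ∈ (0,∞)^m let W(w) = diag(√w_1,…,√w_m) and A_W = W A W. Suppose at a point w⁰ ∈ (0,∞)^m the operator norm of A_{W(w⁰)} is strictly less than 1 (so I − A_W² is positive definite). For n̄ ∈ ℕ^m define P(w, n̄) = (det(I − A_W²))^{1/2} · Haf(A_{n̄})² · ∏_{i=1}^m w_i^{n_i}/n_i!. Then for each k, the partial derivative ∂P/∂w_k at w⁰ exists and equals ((n_k − ⟨n_k⟩)/w⁰_k) · P(w⁰, n̄), where ⟨n_k⟩ := (A_W² (I − A_W²)^{-1})_{kk} evaluated at w⁰. -/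
open Finset Matrix
open scoped Matrix.Norms.L2Operator

/-- The index type for `A_n̄` (row/column `i` repeated `n i` times), ordered
lexicographically. -/
instance repIdxFintype {M : ℕ} (n : Fin M → ℕ) : Fintype (Σₗ i : Fin M, Fin (n i)) :=
  inferInstanceAs (Fintype ((i : Fin M) × Fin (n i)))

/-- `A_n̄`: the matrix obtained from the `M × M` matrix `A` by repeating row and column `i`
exactly `n i` times (deleting them when `n i = 0`).  Note that `hafnian (repMat A n) = 0`
automatically when `Σ n_i` is odd. -/
def repMat {M : ℕ} {R : Type*} (A : Matrix (Fin M) (Fin M) R) (n : Fin M → ℕ) :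
    Matrix (Σₗ i : Fin M, Fin (n i)) (Σₗ i : Fin M, Fin (n i)) R :=
  A.submatrix (fun p => (ofLex p).1) (fun p => (ofLex p).1)

/-- `A_W = W A W` with `W = diag(√w_1,…,√w_m)`. -/
noncomputable def WAW {m : ℕ} (A : Matrix (Fin m) (Fin m) ℝ) (w : Fin m → ℝ) :
    Matrix (Fin m) (Fin m) ℝ :=
  Matrix.diagonal (fun i => Real.sqrt (w i)) * A * Matrix.diagonal (fun i => Real.sqrt (w i))

/-- The GBS probability (WAW parametrization):
`P(w, n̄) = det(I − A_W²)^{1/2} · Haf(A_n̄)² · ∏_i w_i^{n_i}/n_i!`. -/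
noncomputable def Pgbs {m : ℕ} (A : Matrix (Fin m) (Fin m) ℝ) (n : Fin m → ℕ)
    (w : Fin m → ℝ) : ℝ :=
  Real.sqrt (1 - WAW A w ^ 2).det * hafnian (repMat A n) ^ 2 *
    ∏ i, w i ^ n i / (Nat.factorial (n i) : ℝ)

/-- `⟨n_k⟩ = (A_W² (I − A_W²)⁻¹)_{kk}`, the mean photon number in mode `k`. -/
noncomputable def navg {m : ℕ} (A : Matrix (Fin m) (Fin m) ℝ) (w : Fin m → ℝ)
    (k : Fin m) : ℝ :=
  (WAW A w ^ 2 * (1 - WAW A w ^ 2)⁻¹ : Matrix (Fin m) (Fin m) ℝ) k k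

/-! Conjugation by `diag(√w)` turns `A_W` into `X = A * diag w`, which is affine in `w_k` with
derivative `A * E_kk`, and leaves `det (1 - X²)` and the diagonal of `X² (1 - X²)⁻¹` unchanged.
Jacobi's formula together with `Commute X (1 - X²)⁻¹` gives
`∂_k det (1 - X²) = -2 det (1 - X²) tr ((1 - X²)⁻¹ X A E_kk) = -2 ⟨n_k⟩ det (1 - X²) / w_k`,
so the square root contributes `-⟨n_k⟩ / w_k` to the logarithmic derivative of `P` and the
monomial `∏ w_i ^ n_i` contributes `n_k / w_k`. The determinant does not vanish because
`‖A_W²‖ < 1` (were it negative, `√` would vanish near `w⁰`, and so would both sides). -/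

namespace Matrix

section CommRing

variable {R : Type*} [CommRing R] {n : Type*} [Fintype n] [DecidableEq n]

theorem trace_adjugate_mul (M N : Matrix n n R) :
    trace (adjugate M * N) = ∑ j, (M.updateCol j fun i => N i j).det := by
  refine Finset.sum_congr rfl fun j _ => ?_
  rw [diag_apply, ← cramer_apply, cramer_eq_adjugate_mulVec]
  rfl

theorem det_updateCol_eq_sum (M : Matrix n n R) (j : n) (c : n → R) :
    (M.updateCol j c).det =
      ∑ σ : Equiv.Perm n, (Equiv.Perm.sign σ : R) * ((∏ i ∈ univ.erase j, M (σ i) i) * c (σ j)) := by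
  rw [det_apply']
  refine Finset.sum_congr rfl fun σ _ => ?_
  rw [← Finset.prod_erase_mul _ _ (Finset.mem_univ j), updateCol_self]
  congr 2
  exact Finset.prod_congr rfl fun i hi => updateCol_ne (Finset.ne_of_mem_erase hi)

theorem adjugate_eq_det_smul_inv_s8 {M : Matrix n n R} (h : IsUnit M.det) :
    adjugate M = M.det • M⁻¹ := by
  rw [nonsing_inv_apply M h, smul_smul, h.mul_val_inv, one_smul]

theorem commute_nonsing_inv_right {A B : Matrix n n R} (h : Commute A B) : Commute A B⁻¹ := by
  by_cases hB : IsUnit B.det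
  · have hB' := (isUnit_iff_isUnit_det B).2 hB
    rw [← hB'.unit_spec] at h
    rw [← hB'.unit_spec, ← coe_units_inv]
    exact h.units_inv_right
  · rw [nonsing_inv_apply_not_isUnit B hB]
    exact Commute.zero_right A

theorem commute_inv_one_sub_sq (X : Matrix n n R) : Commute X (1 - X ^ 2)⁻¹ :=
  commute_nonsing_inv_right ((Commute.one_right X).sub_right (Commute.self_pow X 2))

theorem one_sub_conj_sq {P Q : Matrix n n R} (hPQ : P * Q = 1) (X : Matrix n n R) :
    1 - (P * X * Q) ^ 2 = P * (1 - X ^ 2) * Q := by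
  have hQP : Q * P = 1 := mul_eq_one_comm.1 hPQ
  rw [Matrix.mul_sub, Matrix.sub_mul, Matrix.mul_one, hPQ, sq, sq]
  congr 1
  simp only [Matrix.mul_assoc]
  rw [← Matrix.mul_assoc Q, hQP, Matrix.one_mul]

theorem conj_sq_mul_inv_one_sub_conj_sq {P Q : Matrix n n R} (hPQ : P * Q = 1)
    (X : Matrix n n R) :
    (P * X * Q) ^ 2 * (1 - (P * X * Q) ^ 2)⁻¹ = P * (X ^ 2 * (1 - X ^ 2)⁻¹) * Q := by
  have hQP : Q * P = 1 := mul_eq_one_comm.1 hPQ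
  rw [one_sub_conj_sq hPQ, mul_inv_rev, mul_inv_rev, inv_eq_right_inv hPQ, inv_eq_right_inv hQP,
    sq, sq]
  simp only [Matrix.mul_assoc]
  rw [← Matrix.mul_assoc Q P, hQP, Matrix.one_mul, ← Matrix.mul_assoc Q P, hQP, Matrix.one_mul]

theorem diagonal_mul_mul_diagonal_apply_self (d e : n → R) (Z : Matrix n n R) (k : n) :
    (diagonal d * Z * diagonal e) k k = d k * Z k k * e k := by
  rw [mul_diagonal, diagonal_mul]

theorem trace_mul_mul_diagonal_mul_single (Z A : Matrix n n R) (w : n → R) (k : n) :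
    trace (Z * (A * diagonal w) * (A * single k k 1)) * w k = (Z * (A * diagonal w) ^ 2) k k := by
  rw [← Matrix.mul_assoc, trace_mul_single, MulOpposite.op_one, one_smul, sq]
  simp only [← Matrix.mul_assoc]
  rw [mul_diagonal]

end CommRing

section Calculus

variable {𝕜 : Type*} [RCLike 𝕜] {n : Type*} [Fintype n] [DecidableEq n]

theorem _root_.HasDerivAt.matrix_apply {f : 𝕜 → Matrix n n 𝕜} {f' : Matrix n n 𝕜} {t : 𝕜}
    (h : HasDerivAt f f' t) (i j : n) : HasDerivAt (fun s => f s i j) (f' i j) t :=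
  (entryLinearMap 𝕜 𝕜 i j).toContinuousLinearMap.hasFDerivAt.comp_hasDerivAt t h

theorem _root_.HasDerivAt.matrix_det {f : 𝕜 → Matrix n n 𝕜} {f' : Matrix n n 𝕜} {t : 𝕜}
    (h : HasDerivAt f f' t) :
    HasDerivAt (fun s => (f s).det) (trace (adjugate (f t) * f')) t := by
  have hleibniz := HasDerivAt.fun_sum fun σ (_ : σ ∈ (univ : Finset (Equiv.Perm n))) =>
    (HasDerivAt.fun_finsetProd fun i (_ : i ∈ univ) => h.matrix_apply (σ i) i).const_mul
      (Equiv.Perm.sign σ : 𝕜)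
  simp only [← det_apply', smul_eq_mul, Finset.mul_sum] at hleibniz
  rw [trace_adjugate_mul]
  simp only [det_updateCol_eq_sum]
  rw [Finset.sum_comm]
  exact hleibniz

theorem _root_.HasDerivAt.det_one_sub_sq {f : 𝕜 → Matrix n n 𝕜} {f' : Matrix n n 𝕜} {t : 𝕜}
    (h : HasDerivAt f f' t) (hu : IsUnit (1 - f t ^ 2).det) :
    HasDerivAt (fun s => (1 - f s ^ 2).det)
      (-2 * (1 - f t ^ 2).det * trace ((1 - f t ^ 2)⁻¹ * f t * f')) t := by
  have hsq : HasDerivAt (fun s => 1 - f s ^ 2) (-(f' * f t + f t * f')) t := by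
    simpa only [sq] using (h.fun_mul h).const_sub 1
  have hcycle : trace ((1 - f t ^ 2)⁻¹ * f' * f t) = trace ((1 - f t ^ 2)⁻¹ * f t * f') := by
    rw [trace_mul_comm, ← Matrix.mul_assoc, (commute_inv_one_sub_sq (f t)).eq]
  convert hsq.matrix_det using 1
  rw [adjugate_eq_det_smul_inv_s8 hu, smul_mul, trace_smul, Matrix.mul_neg, trace_neg, Matrix.mul_add,
    trace_add, ← Matrix.mul_assoc, ← Matrix.mul_assoc, hcycle, smul_eq_mul]
  ring

theorem hasDerivAt_diagonal_update (w : n → 𝕜) (k : n) (t : 𝕜) :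
    HasDerivAt (fun s => diagonal (Function.update w k s)) (single k k 1) t := by
  rw [← diagonal_single]
  exact (diagonalLinearMap n 𝕜 𝕜).toContinuousLinearMap.hasFDerivAt.comp_hasDerivAt t
    (hasDerivAt_update w k t)

theorem isUnit_det_one_sub_sq_of_norm_lt_one {M : Matrix n n 𝕜} (h : ‖M‖ < 1) :
    IsUnit (1 - M ^ 2).det := by
  have hsq : ‖M ^ 2‖ < 1 :=
    (norm_pow_le' M two_pos).trans_lt (pow_lt_one₀ (norm_nonneg M) h two_ne_zero)
  exact (isUnit_iff_isUnit_det _).1 (Units.oneSub _ hsq).isUnit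

end Calculus

end Matrix

theorem HasDerivAt.sqrt_of_eq_mul {f : ℝ → ℝ} {c x : ℝ} (hf : HasDerivAt f (c * f x) x)
    (hx : f x ≠ 0) : HasDerivAt (fun t => √(f t)) (c / 2 * √(f x)) x := by
  rcases hx.lt_or_gt with hneg | hpos
  · have hzero : (fun t => √(f t)) =ᶠ[nhds x] fun _ => 0 := by
      filter_upwards [hf.continuousAt.eventually (gt_mem_nhds hneg)] with t ht
      exact Real.sqrt_eq_zero'.2 ht.le
    rw [Real.sqrt_eq_zero'.2 hneg.le, mul_zero]
    exact (hasDerivAt_const x 0).congr_of_eventuallyEq hzero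
  · convert hf.sqrt hpos.ne' using 1
    have hs : √(f x) ≠ 0 := (Real.sqrt_pos.2 hpos).ne'
    field_simp
    rw [Real.sq_sqrt hpos.le]

theorem hasDerivAt_prod_update_pow_div {𝕜 ι : Type*} [NontriviallyNormedField 𝕜] [Fintype ι]
    [DecidableEq ι] (w : ι → 𝕜) (n : ι → ℕ) (c : ι → 𝕜) (k : ι) (hk : w k ≠ 0) :
    HasDerivAt (fun t => ∏ i, Function.update w k t i ^ n i / c i)
      (n k / w k * ∏ i, w i ^ n i / c i) (w k) := by
  have hsplit : ∀ t, ∏ i, Function.update w k t i ^ n i / c i =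
      t ^ n k / c k * ∏ i ∈ univ.erase k, w i ^ n i / c i := fun t => by
    rw [← Finset.mul_prod_erase _ _ (mem_univ k), Function.update_self]
    congr 1
    exact Finset.prod_congr rfl fun i hi => by rw [Function.update_of_ne (ne_of_mem_erase hi)]
  rw [funext hsplit]
  refine (((hasDerivAt_pow (n k) (w k)).div_const (c k)).mul_const
    (∏ i ∈ univ.erase k, w i ^ n i / c i)).congr_deriv ?_
  rw [← Finset.mul_prod_erase _ _ (mem_univ k)]
  rcases eq_or_ne (n k) 0 with h0 | h0
  · simp [h0]
  · rw [← pow_sub_one_mul h0]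
    field_simp

section WAW

variable {m : ℕ} (A : Matrix (Fin m) (Fin m) ℝ) {w : Fin m → ℝ}

theorem diagonal_sqrt_mul_diagonal_inv_sqrt (hw : ∀ i, 0 < w i) :
    diagonal (fun i => √(w i)) * diagonal (fun i => (√(w i))⁻¹) = 1 := by
  rw [diagonal_mul_diagonal, ← diagonal_one]
  exact congrArg diagonal (funext fun i => mul_inv_cancel₀ (Real.sqrt_pos.2 (hw i)).ne')

theorem WAW_eq_conj (hw : ∀ i, 0 < w i) :
    WAW A w = diagonal (fun i => √(w i)) * (A * diagonal w) * diagonal (fun i => (√(w i))⁻¹) := by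
  have hsq : diagonal w = diagonal (fun i => √(w i)) * diagonal (fun i => √(w i)) := by
    rw [diagonal_mul_diagonal]
    exact congrArg diagonal (funext fun i => (Real.mul_self_sqrt (hw i).le).symm)
  rw [WAW, hsq]
  simp only [Matrix.mul_assoc, diagonal_sqrt_mul_diagonal_inv_sqrt hw, Matrix.mul_one]

theorem det_one_sub_WAW_sq (hw : ∀ i, 0 < w i) :
    (1 - WAW A w ^ 2).det = (1 - (A * diagonal w) ^ 2).det := by
  have h := diagonal_sqrt_mul_diagonal_inv_sqrt hw
  rw [WAW_eq_conj A hw, one_sub_conj_sq h, det_conj_of_mul_eq_one h (mul_eq_one_comm.1 h)]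

theorem navg_eq_inv_mul (hw : ∀ i, 0 < w i) (k : Fin m) :
    navg A w k =
      ((1 - (A * diagonal w) ^ 2)⁻¹ * (A * diagonal w) ^ 2 : Matrix (Fin m) (Fin m) ℝ) k k := by
  rw [navg, WAW_eq_conj A hw, conj_sq_mul_inv_one_sub_conj_sq
    (diagonal_sqrt_mul_diagonal_inv_sqrt hw), diagonal_mul_mul_diagonal_apply_self,
    ← ((commute_inv_one_sub_sq _).pow_left 2).eq, mul_comm, ← mul_assoc,
    inv_mul_cancel₀ (Real.sqrt_pos.2 (hw k)).ne', one_mul]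

theorem hasDerivAt_det_one_sub_WAW_sq_update (hw : ∀ i, 0 < w i)
    (hu : IsUnit (1 - WAW A w ^ 2).det) (k : Fin m) :
    HasDerivAt (fun t => (1 - WAW A (Function.update w k t) ^ 2).det)
      (-2 * navg A w k / w k * (1 - WAW A w ^ 2).det) (w k) := by
  have hpath : HasDerivAt (fun t => A * diagonal (Function.update w k t)) (A * single k k 1) (w k) :=
    (hasDerivAt_diagonal_update w k (w k)).const_mul A
  rw [det_one_sub_WAW_sq A hw] at hu
  have hdet := hpath.det_one_sub_sq (by rwa [Function.update_eq_self])
  simp only [Function.update_eq_self] at hdet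
  have hlocal : (fun t => (1 - WAW A (Function.update w k t) ^ 2).det) =ᶠ[nhds (w k)]
      fun t => (1 - (A * diagonal (Function.update w k t)) ^ 2).det := by
    filter_upwards [eventually_gt_nhds (hw k)] with t ht
    refine det_one_sub_WAW_sq A fun i => ?_
    rcases eq_or_ne i k with rfl | hi
    · rwa [Function.update_self]
    · rw [Function.update_of_ne hi]
      exact hw i
  refine (hdet.congr_of_eventuallyEq hlocal).congr_deriv ?_
  rw [det_one_sub_WAW_sq A hw, navg_eq_inv_mul A hw, ← trace_mul_mul_diagonal_mul_single]
  field_simp [(hw k).ne']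

end WAW

theorem hasDerivAt_Pgbs_weight_general {m : ℕ} (A : Matrix (Fin m) (Fin m) ℝ)
    (w0 : Fin m → ℝ) (hw0 : ∀ i, 0 < w0 i) (hnorm : ‖WAW A w0‖ < 1)
    (n : Fin m → ℕ) (k : Fin m) :
    HasDerivAt (fun t => Pgbs A n (Function.update w0 k t))
      ((((n k : ℝ) - navg A w0 k) / w0 k) * Pgbs A n w0) (w0 k) := by
  have hu := isUnit_det_one_sub_sq_of_norm_lt_one hnorm
  have hdet : HasDerivAt (fun t => (1 - WAW A (Function.update w0 k t) ^ 2).det)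
      (-2 * navg A w0 k / w0 k * (1 - WAW A (Function.update w0 k (w0 k)) ^ 2).det) (w0 k) := by
    simpa only [Function.update_eq_self] using hasDerivAt_det_one_sub_WAW_sq_update A hw0 hu k
  have hsqrt := hdet.sqrt_of_eq_mul (by simpa only [Function.update_eq_self] using hu.ne_zero)
  have hmono := hasDerivAt_prod_update_pow_div w0 n (fun i => ((n i).factorial : ℝ)) k (hw0 k).ne'
  refine ((hsqrt.mul_const (hafnian (repMat A n) ^ 2)).mul hmono).congr_deriv ?_
  simp only [Pgbs, Function.update_eq_self]
  ring

/-- in the WAW parametrization with fixed symmetric `A`, `w⁰ ∈ (0,∞)^m` and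
`‖A_{W(w⁰)}‖ < 1` (L2 operator norm), the partial derivative `∂P/∂w_k` of the GBS probability
at `w⁰` exists and equals `((n_k − ⟨n_k⟩)/w⁰_k) · P(w⁰, n̄)`. -/
theorem hasDerivAt_Pgbs_weight {m : ℕ} (A : Matrix (Fin m) (Fin m) ℝ) (hA : A.IsSymm)
    (w0 : Fin m → ℝ) (hw0 : ∀ i, 0 < w0 i) (hnorm : ‖WAW A w0‖ < 1)
    (n : Fin m → ℕ) (k : Fin m) :
    HasDerivAt (fun t => Pgbs A n (Function.update w0 k t))
      ((((n k : ℝ) - navg A w0 k) / w0 k) * Pgbs A n w0) (w0 k) :=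
  hasDerivAt_Pgbs_weight_general A w0 hw0 hnorm n k
end

section
/- Let A be a fixed real symmetric m×m matrix, let f^{(1)},…,f^{(m)} ∈ ℝ^d, and for θ ∈ ℝ^d define w_k(θ) = exp(−θᵀ f^{(k)}), W(θ) = diag(√w_1(θ),…,√w_m(θ)), and A_W = W(θ) A W(θ). Suppose at θ₀ ∈ ℝ^d the operator norm of A_{W(θ₀)} is strictly less than 1. For n̄ ∈ ℕ^m define P(θ, n̄) = (det(I − A_W²))^{1/2} · Haf(A_{n̄})² · ∏_{i=1}^m w_i(θ)^{n_i}/n_i!. Then for each j ∈ {1,…,d}, the partial derivative ∂P/∂θ_j at θ₀ exists and equals −Σ_{k=1}^m (n_k − ⟨n_k⟩) f^{(k)}_j · P(θ₀, n̄), where ⟨n_k⟩ := (A_W² (I − A_W²)^{-1})_{kk} evaluated at θ₀. -/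
open Finset Matrix
open scoped Matrix.Norms.L2Operator

/-- The reparametrized weights `w_k(θ) = exp(−θᵀ f^{(k)})`. -/
noncomputable def wexp {m d : ℕ} (f : Fin m → Fin d → ℝ) (θ : Fin d → ℝ) :
    Fin m → ℝ := fun k => Real.exp (-(∑ l, θ l * f k l))

/-!
Along the line `θ = θ₀ + (t - θ₀ j) e_j` the weights are `w₀ k · exp (-(t - t₀) φ k)` with
`φ k = f k j`. The hafnian does not depend on `θ`, and the monomial factor `∏ wᵢ^{nᵢ}/nᵢ!` is a
constant times `exp (-(t - t₀) ∑ nᵢ φᵢ)`. For the determinant, conjugating by the diagonal factor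
turns `det (1 - A_W²)` into `det (1 - G U G U)`, where `G = A_{W(θ₀)}` and `U = exp (-(t - t₀) Φ)`
with `Φ = diag φ`. Jacobi's formula, together with the fact that `G` commutes with `(1 - G²)⁻¹`,
gives the logarithmic derivative `2 tr (G² (1 - G²)⁻¹ Φ) = 2 ∑ ⟨n_k⟩ φ_k`. Finally `‖G‖ < 1`
makes `1 - G²` positive definite, so the square root of the determinant is differentiable.
-/

theorem hasDerivAt_exp_neg_sub_mul (c t₀ : ℝ) :
    HasDerivAt (fun t => Real.exp (-((t - t₀) * c))) (-c) t₀ := by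
  simpa using ((((hasDerivAt_id t₀).sub_const t₀).mul_const c).neg).exp

namespace Matrix

variable {n : Type*} [Fintype n]

theorem star_dotProduct_self_eq_norm_sq {𝕜 : Type*} [RCLike 𝕜] (x : n → 𝕜) :
    star x ⬝ᵥ x = ((‖WithLp.toLp 2 x‖ : ℝ) : 𝕜) ^ 2 := by
  rw [← inner_self_eq_norm_sq_to_K, EuclideanSpace.inner_toLp_toLp, dotProduct_comm]

variable [DecidableEq n]

open scoped ComplexOrder in
theorem posDef_one_sub_conjTranspose_mul_self {𝕜 : Type*} [RCLike 𝕜] {G : Matrix n n 𝕜}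
    (hG : ‖G‖ < 1) : (1 - Gᴴ * G).PosDef := by
  refine .of_dotProduct_mulVec_pos (by simp [IsHermitian, conjTranspose_sub]) fun x hx => ?_
  have hGx : ‖WithLp.toLp 2 (G *ᵥ x)‖ < ‖WithLp.toLp 2 x‖ := by
    have hx' : 0 < ‖WithLp.toLp 2 x‖ := by simpa using hx
    calc ‖WithLp.toLp 2 (G *ᵥ x)‖ ≤ ‖G‖ * ‖WithLp.toLp 2 x‖ := G.l2_opNorm_mulVec (WithLp.toLp 2 x)
      _ < ‖WithLp.toLp 2 x‖ := mul_lt_of_lt_one_left hx' hG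
  rw [sub_mulVec, one_mulVec, dotProduct_sub, ← mulVec_mulVec, dotProduct_mulVec,
    ← star_mulVec, star_dotProduct_self_eq_norm_sq, star_dotProduct_self_eq_norm_sq,
    ← RCLike.ofReal_pow, ← RCLike.ofReal_pow, ← RCLike.ofReal_sub, RCLike.ofReal_pos, sub_pos]
  gcongr

theorem hasDerivAt_det_s9 {𝕜 : Type*} [NontriviallyNormedField 𝕜] {M : 𝕜 → Matrix n n 𝕜}
    {M' : Matrix n n 𝕜} {t₀ : 𝕜} (hM : ∀ a b, HasDerivAt (fun t => M t a b) (M' a b) t₀) :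
    HasDerivAt (fun t => (M t).det) ((M t₀).adjugate * M').trace t₀ := by
  have hterm (σ : Equiv.Perm n) : HasDerivAt (fun t => (Equiv.Perm.sign σ : 𝕜) * ∏ i, M t (σ i) i)
      ((Equiv.Perm.sign σ : 𝕜) * ∑ i, (∏ i' ∈ univ.erase i, M t₀ (σ i') i') * M' (σ i) i) t₀ := by
    simpa [smul_eq_mul] using
      ((HasDerivAt.finsetProd (u := univ) fun i _ => hM (σ i) i).const_mul _)
  have hcol (i : n) : ((M t₀).adjugate * M') i i = ∑ σ : Equiv.Perm n,
      (Equiv.Perm.sign σ : 𝕜) * ((∏ i' ∈ univ.erase i, M t₀ (σ i') i') * M' (σ i) i) := by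
    have hcramer : ((M t₀).adjugate * M') i i = (M t₀).cramer (fun r => M' r i) i := by
      simp [cramer_eq_adjugate_mulVec, mul_apply, mulVec, dotProduct]
    rw [hcramer, cramer_apply, det_apply']
    refine sum_congr rfl fun σ _ => congrArg _ ?_
    rw [← mul_prod_erase univ _ (mem_univ i), updateCol_self, mul_comm,
      prod_congr rfl fun i' hi' => updateCol_ne (ne_of_mem_erase hi')]
  rw [show (fun t => (M t).det) = _ from funext fun t => det_apply' (M t)]
  refine (HasDerivAt.fun_sum fun σ _ => hterm σ).congr_deriv ?_
  simp only [trace, diag, hcol, mul_sum]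
  exact sum_comm

theorem _root_.Commute.nonsing_inv_right {α : Type*} [CommRing α] {A B : Matrix n n α}
    (h : Commute A B) : Commute A B⁻¹ := by
  rw [nonsing_inv_eq_ringInverse]
  by_cases hB : IsUnit B
  · obtain ⟨u, rfl⟩ := hB
    rw [Ring.inverse_unit]
    exact h.units_inv_right
  · rw [Ring.inverse_non_unit _ hB]
    exact Commute.zero_right A

theorem trace_inv_one_sub_sq_mul {α : Type*} [CommRing α] (G Φ : Matrix n n α) :
    ((1 - G ^ 2)⁻¹ * (G * Φ * G + G ^ 2 * Φ)).trace = 2 * (G ^ 2 * (1 - G ^ 2)⁻¹ * Φ).trace := by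
  have hG : Commute G (1 - G ^ 2)⁻¹ :=
    (((Commute.one_right G).sub_right (Commute.self_pow G 2))).nonsing_inv_right
  have hG2 : Commute (G ^ 2) (1 - G ^ 2)⁻¹ := hG.pow_left 2
  have h1 : ((1 - G ^ 2)⁻¹ * (G * Φ * G)).trace = (G ^ 2 * (1 - G ^ 2)⁻¹ * Φ).trace := by
    rw [show (1 - G ^ 2)⁻¹ * (G * Φ * G) = (1 - G ^ 2)⁻¹ * G * Φ * G by
        simp only [Matrix.mul_assoc],
      trace_mul_comm, ← Matrix.mul_assoc, ← Matrix.mul_assoc, hG.eq, Matrix.mul_assoc _ G G, ← sq,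
      ← hG2.eq]
  have h2 : ((1 - G ^ 2)⁻¹ * (G ^ 2 * Φ)).trace = (G ^ 2 * (1 - G ^ 2)⁻¹ * Φ).trace := by
    rw [← Matrix.mul_assoc, hG2.eq]
  rw [Matrix.mul_add, trace_add, h1, h2, two_mul]

theorem det_one_sub_sq_mul_mul {α : Type*} [CommRing α] (S G : Matrix n n α) :
    (1 - (S * G * S) ^ 2).det = (1 - G * (S * S) * G * (S * S)).det := by
  rw [sq, show S * G * S * (S * G * S) = S * (G * S * S * G * S) by simp only [Matrix.mul_assoc],
    det_one_sub_mul_comm]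
  simp only [Matrix.mul_assoc]

theorem hasDerivAt_one_sub_mul_diagonal_exp_apply (G : Matrix n n ℝ) (φ : n → ℝ) (t₀ : ℝ)
    (a b : n) :
    HasDerivAt (fun t => (1 - G * diagonal (fun k => Real.exp (-((t - t₀) * φ k))) * G *
        diagonal (fun k => Real.exp (-((t - t₀) * φ k)))) a b)
      ((G * diagonal φ * G + G ^ 2 * diagonal φ) a b) t₀ := by
  have hentry : (fun t => (1 - G * diagonal (fun k => Real.exp (-((t - t₀) * φ k))) * G *
        diagonal (fun k => Real.exp (-((t - t₀) * φ k)))) a b) = fun t =>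
      (1 : Matrix n n ℝ) a b - (∑ c, G a c * Real.exp (-((t - t₀) * φ c)) * G c b)
        * Real.exp (-((t - t₀) * φ b)) := by
    funext t
    rw [Matrix.sub_apply, mul_diagonal, mul_apply]
    simp only [mul_diagonal]
  rw [hentry]
  have hsum := HasDerivAt.fun_sum (u := univ) fun c _ =>
    ((hasDerivAt_exp_neg_sub_mul (φ c) t₀).const_mul (G a c)).mul_const (G c b)
  refine (hsum.fun_mul (hasDerivAt_exp_neg_sub_mul (φ b) t₀)).const_sub _ |>.congr_deriv ?_
  rw [Matrix.add_apply, mul_diagonal, mul_apply, sq, mul_apply]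
  simp only [mul_diagonal, sub_self, zero_mul, neg_zero, Real.exp_zero, mul_one, mul_neg, neg_mul,
    sum_neg_distrib, neg_add, neg_neg]

end Matrix

section Weights

variable {m : ℕ}

theorem wexp_update {d : ℕ} (f : Fin m → Fin d → ℝ) (θ₀ : Fin d → ℝ) (j : Fin d) (t : ℝ) :
    wexp f (Function.update θ₀ j t) = wexp f θ₀ * fun k => Real.exp (-((t - θ₀ j) * f k j)) := by
  funext k
  simp only [wexp, Pi.mul_apply, ← Real.exp_add]
  congr 1
  have : Function.update θ₀ j t = θ₀ + Pi.single j (t - θ₀ j) := by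
    ext l; rcases eq_or_ne l j with rfl | hl <;> simp [*]
  simp only [this, Pi.add_apply, add_mul, sum_add_distrib, Pi.single_apply, ite_mul, zero_mul,
    sum_ite_eq', mem_univ, if_true]
  ring

theorem hasDerivAt_prod_pow_div_factorial (w₀ φ : Fin m → ℝ) (n : Fin m → ℕ) (t₀ : ℝ) :
    HasDerivAt (fun t => ∏ i, (w₀ * fun k => Real.exp (-((t - t₀) * φ k))) i ^ n i
        / (n i).factorial)
      (-(∑ i, (n i : ℝ) * φ i) * ∏ i, w₀ i ^ n i / (n i).factorial) t₀ := by
  have hfun : (fun t => ∏ i, (w₀ * fun k => Real.exp (-((t - t₀) * φ k))) i ^ n i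
      / (n i).factorial) = fun t => (∏ i, w₀ i ^ n i / (n i).factorial) *
        Real.exp (-((t - t₀) * ∑ i, (n i : ℝ) * φ i)) := by
    funext t
    simp only [Pi.mul_apply, mul_pow, ← Real.exp_nat_mul, mul_div_right_comm, prod_mul_distrib,
      ← Real.exp_sum, mul_sum]
    congr 2
    rw [← sum_neg_distrib]
    exact sum_congr rfl fun i _ => by ring
  rw [hfun]
  exact ((hasDerivAt_exp_neg_sub_mul _ t₀).const_mul _).congr_deriv (by ring)

theorem WAW_mul (A : Matrix (Fin m) (Fin m) ℝ) {v : Fin m → ℝ} (hv : 0 ≤ v) (u : Fin m → ℝ) :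
    WAW A (v * u) = diagonal (fun i => √(u i)) * WAW A v * diagonal (fun i => √(u i)) := by
  ext a b
  simp only [WAW, mul_diagonal, diagonal_mul, Pi.mul_apply, Real.sqrt_mul (hv _)]
  ring

theorem isSymm_WAW {A : Matrix (Fin m) (Fin m) ℝ} (hA : A.IsSymm) (w : Fin m → ℝ) :
    (WAW A w).IsSymm := by
  simp only [IsSymm, WAW, transpose_mul, diagonal_transpose, hA.eq, Matrix.mul_assoc]

theorem det_one_sub_sq_WAW_pos {A : Matrix (Fin m) (Fin m) ℝ} (hA : A.IsSymm)
    {w : Fin m → ℝ} (hnorm : ‖WAW A w‖ < 1) : 0 < (1 - WAW A w ^ 2).det := by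
  have hG : (WAW A w)ᴴ = WAW A w := by
    rw [conjTranspose_eq_transpose_of_trivial, (isSymm_WAW hA w).eq]
  have := (posDef_one_sub_conjTranspose_mul_self hnorm).det_pos
  rwa [hG, ← sq] at this

theorem hasDerivAt_det_one_sub_sq_WAW (A : Matrix (Fin m) (Fin m) ℝ) {w₀ : Fin m → ℝ}
    (hw₀ : 0 ≤ w₀) (hdet : IsUnit (1 - WAW A w₀ ^ 2).det) (φ : Fin m → ℝ) (t₀ : ℝ) :
    HasDerivAt (fun t => (1 - WAW A (w₀ * fun k => Real.exp (-((t - t₀) * φ k))) ^ 2).det)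
      (2 * (1 - WAW A w₀ ^ 2).det * ∑ k, navg A w₀ k * φ k) t₀ := by
  set G := WAW A w₀
  have hfun : (fun t => (1 - WAW A (w₀ * fun k => Real.exp (-((t - t₀) * φ k))) ^ 2).det)
      = fun t => (1 - G * diagonal (fun k => Real.exp (-((t - t₀) * φ k))) * G *
        diagonal (fun k => Real.exp (-((t - t₀) * φ k)))).det := by
    funext t
    rw [WAW_mul A hw₀, Matrix.det_one_sub_sq_mul_mul, diagonal_mul_diagonal]
    simp only [Real.mul_self_sqrt (Real.exp_pos _).le, G]
  have hadj : (1 - G ^ 2).adjugate = (1 - G ^ 2).det • (1 - G ^ 2)⁻¹ := by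
    rw [Matrix.inv_def, smul_smul, Ring.mul_inverse_cancel _ hdet, one_smul]
  rw [hfun]
  refine (Matrix.hasDerivAt_det_s9 (hasDerivAt_one_sub_mul_diagonal_exp_apply G φ t₀))
    |>.congr_deriv ?_
  simp only [sub_self, zero_mul, neg_zero, Real.exp_zero, diagonal_one, Matrix.mul_one]
  rw [← sq, hadj, smul_mul, trace_smul, trace_inv_one_sub_sq_mul, smul_eq_mul]
  simp only [trace, Matrix.diag_apply, mul_diagonal, navg, G]
  ring

theorem hasDerivAt_sqrt_det_one_sub_sq_WAW {A : Matrix (Fin m) (Fin m) ℝ}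
    (hA : A.IsSymm) {w₀ : Fin m → ℝ} (hw₀ : 0 ≤ w₀) (hnorm : ‖WAW A w₀‖ < 1)
    (φ : Fin m → ℝ) (t₀ : ℝ) :
    HasDerivAt (fun t => √(1 - WAW A (w₀ * fun k => Real.exp (-((t - t₀) * φ k))) ^ 2).det)
      (√(1 - WAW A w₀ ^ 2).det * ∑ k, navg A w₀ k * φ k) t₀ := by
  have hpos := det_one_sub_sq_WAW_pos hA hnorm
  have hval : (1 - WAW A (w₀ * fun k => Real.exp (-((t₀ - t₀) * φ k))) ^ 2).det
      = (1 - WAW A w₀ ^ 2).det := by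
    simp only [sub_self, zero_mul, neg_zero, Real.exp_zero, ← Pi.one_def, mul_one]
  have h := (hasDerivAt_det_one_sub_sq_WAW A hw₀ hpos.ne'.isUnit φ t₀).sqrt (hval ▸ hpos.ne')
  refine h.congr_deriv ?_
  rw [hval]
  field_simp
  rw [Real.sq_sqrt hpos.le]
  ring

end Weights

/-- with weights `w_k(θ) = exp(−θᵀ f^{(k)})` and `‖A_{W(θ₀)}‖ < 1`
(L2 operator norm), the partial derivative `∂P/∂θ_j` of the GBS probability at `θ₀` exists
and equals `−Σ_k (n_k − ⟨n_k⟩) f^{(k)}_j · P(θ₀, n̄)`. -/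
theorem hasDerivAt_Pgbs_theta {m d : ℕ} (A : Matrix (Fin m) (Fin m) ℝ) (hA : A.IsSymm)
    (f : Fin m → Fin d → ℝ) (θ₀ : Fin d → ℝ)
    (hnorm : ‖WAW A (wexp f θ₀)‖ < 1)
    (n : Fin m → ℕ) (j : Fin d) :
    HasDerivAt (fun t => Pgbs A n (wexp f (Function.update θ₀ j t)))
      (-(∑ k, ((n k : ℝ) - navg A (wexp f θ₀) k) * f k j) * Pgbs A n (wexp f θ₀))
      (θ₀ j) := by
  have hw₀ : 0 ≤ wexp f θ₀ := fun k => (Real.exp_pos _).le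
  have hdet := hasDerivAt_sqrt_det_one_sub_sq_WAW hA hw₀ hnorm (fun k => f k j) (θ₀ j)
  have hprod := hasDerivAt_prod_pow_div_factorial (wexp f θ₀) (fun k => f k j) n (θ₀ j)
  simp only [Pgbs, wexp_update]
  refine ((hdet.mul_const (hafnian (repMat A n) ^ 2)).fun_mul hprod).congr_deriv ?_
  simp only [sub_self, zero_mul, neg_zero, Real.exp_zero, ← Pi.one_def, mul_one, sub_mul,
    sum_sub_distrib]
  ring
end

section
/- Let m ≥ 1, let V be a real symmetric 2m×2m matrix, let Z = diag(I_m, −I_m), and suppose V + Z/2 is positive semidefinite and V + I/2 is positive definite. Let w_1,…,w_m ∈ [0,1], W = diag(w_1,…,w_m), and 𝒲 = W ⊕ W (the 2m×2m block-diagonal matrix with two copies of W). Then the matrix B = I − 𝒲 + 𝒲^{1/2} (V + I/2)^{-1} 𝒲^{1/2} is positive definite, and the matrix V_𝒲 := −I/2 + B^{-1} satisfies: V_𝒲 + Z/2 is positive semidefinite. -/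
open Matrix

/-- `Z = diag(I_m, −I_m) = σ^z ⊗ I_m` as a `2m × 2m` matrix. -/
def Zmat (m : ℕ) : Matrix (Fin (2 * m)) (Fin (2 * m)) ℝ :=
  Matrix.diagonal fun i => if (i : ℕ) < m then 1 else -1

/-- `𝒲 = W ⊕ W`: the doubled vector of weights, `(w_1,…,w_m,w_1,…,w_m)`. -/
def wExt {m : ℕ} (w : Fin m → ℝ) : Fin (2 * m) → ℝ := fun i =>
  if h : (i : ℕ) < m then w ⟨i, h⟩ else w ⟨(i : ℕ) - m, by have := i.isLt; omega⟩

/-- `B = I − 𝒲 + 𝒲^{1/2} (V + I/2)⁻¹ 𝒲^{1/2}`, with `𝒲 = W ⊕ W` and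
`𝒲^{1/2} = diag(√w) ⊕ diag(√w)`. -/
noncomputable def Bmat {m : ℕ} (V : Matrix (Fin (2 * m)) (Fin (2 * m)) ℝ)
    (w : Fin m → ℝ) : Matrix (Fin (2 * m)) (Fin (2 * m)) ℝ :=
  1 - Matrix.diagonal (wExt w) +
    Matrix.diagonal (fun i => Real.sqrt (wExt w i)) * (V + (1 / 2 : ℝ) • 1)⁻¹ *
      Matrix.diagonal (fun i => Real.sqrt (wExt w i))

/-!
Write `A = V + I/2` and `P = (I - Z)/2` for the projection onto the second block of coordinates;
the hypothesis says `A ≥ P` and the claim says `B⁻¹ ≥ P`. For positive definite `M` and an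
orthogonal projection `P`, `M ≥ P` holds iff `P M⁻¹ P ≤ P`: both directions follow from the
variational formula `x ⬝ M x = max_v (2 x ⬝ v - v ⬝ M⁻¹ v)`. Because `𝒲^{1/2}` commutes with `P`,
`P - P B P = 𝒲^{1/2} (P - P A⁻¹ P) 𝒲^{1/2}`, so `A ≥ P` gives `P B P ≤ P`, i.e. `B⁻¹ ≥ P`.
Finally `B = (I - 𝒲) + 𝒲^{1/2} A⁻¹ 𝒲^{1/2}` is positive definite because the two positive
semidefinite summands have kernels meeting only in `0`.
-/

namespace Matrix

variable {n : Type*} [Fintype n]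

lemma IsHermitian.dotProduct_mulVec_comm {M : Matrix n n ℝ} (hM : M.IsHermitian) (x y : n → ℝ) :
    x ⬝ᵥ M *ᵥ y = M *ᵥ x ⬝ᵥ y := by
  rw [dotProduct_mulVec, ← mulVec_transpose, ← conjTranspose_eq_transpose_of_trivial, hM.eq]

lemma IsStarProjection.isHermitian {P : Matrix n n ℝ} (hP : IsStarProjection P) :
    P.IsHermitian :=
  hP.isSelfAdjoint

lemma IsStarProjection.dotProduct_mulVec_self {P : Matrix n n ℝ} (hP : IsStarProjection P)
    (x : n → ℝ) : x ⬝ᵥ P *ᵥ x = P *ᵥ x ⬝ᵥ P *ᵥ x := by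
  rw [← hP.isHermitian.dotProduct_mulVec_comm, mulVec_mulVec, hP.isIdempotentElem.eq]

lemma IsStarProjection.dotProduct_mulVec_sub_mul_mul {P : Matrix n n ℝ} (hP : IsStarProjection P)
    (N : Matrix n n ℝ) (x : n → ℝ) :
    x ⬝ᵥ (P - P * N * P) *ᵥ x = P *ᵥ x ⬝ᵥ P *ᵥ x - P *ᵥ x ⬝ᵥ N *ᵥ (P *ᵥ x) := by
  rw [sub_mulVec, dotProduct_sub, hP.dotProduct_mulVec_self, ← mulVec_mulVec, ← mulVec_mulVec,
    hP.isHermitian.dotProduct_mulVec_comm x]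

lemma PosDef.add_conjTranspose_mul_mul {m : Type*} [Fintype m] {K : Matrix n n ℝ}
    {N : Matrix m m ℝ} {D : Matrix m n ℝ} (hK : K.PosSemidef) (hN : N.PosDef)
    (hKD : (K + Dᴴ * D).PosDef) : (K + Dᴴ * N * D).PosDef := by
  refine .of_dotProduct_mulVec_pos (hK.1.add (isHermitian_conjTranspose_mul_mul D hN.1))
    fun x hx => ?_
  have hquad : ∀ L : Matrix m m ℝ, star x ⬝ᵥ (Dᴴ * L * D) *ᵥ x = star (D *ᵥ x) ⬝ᵥ L *ᵥ (D *ᵥ x) :=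
    fun L => by simp only [star_mulVec, dotProduct_mulVec, vecMul_vecMul]
  have hKx := hK.dotProduct_mulVec_nonneg x
  rw [add_mulVec, dotProduct_add, hquad]
  by_cases hDx : D *ᵥ x = 0
  · have hpos := hKD.dotProduct_mulVec_pos hx
    rw [add_mulVec, dotProduct_add, ← mulVec_mulVec, hDx, mulVec_zero, dotProduct_zero,
      add_zero] at hpos
    simpa [hDx] using hpos
  · linarith [hN.dotProduct_mulVec_pos hDx]

variable [DecidableEq n]

lemma PosDef.two_mul_dotProduct_sub_le {M : Matrix n n ℝ} (hM : M.PosDef) (x v : n → ℝ) :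
    2 * (x ⬝ᵥ v) - v ⬝ᵥ M⁻¹ *ᵥ v ≤ x ⬝ᵥ M *ᵥ x := by
  have hdet : IsUnit M.det := isUnit_iff_ne_zero.mpr hM.det_pos.ne'
  -- the gap is `(v - M x) ⬝ M⁻¹ (v - M x)`
  have h := hM.inv.posSemidef.dotProduct_mulVec_nonneg (v - M *ᵥ x)
  rw [star_trivial, mulVec_sub, mulVec_mulVec, nonsing_inv_mul M hdet, one_mulVec,
    dotProduct_sub, sub_dotProduct, sub_dotProduct, ← hM.1.dotProduct_mulVec_comm,
    ← hM.1.dotProduct_mulVec_comm, mulVec_mulVec, mul_nonsing_inv M hdet, one_mulVec, dotProduct_comm v x] at h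
  linarith

theorem PosDef.posSemidef_sub_isStarProjection_iff {M P : Matrix n n ℝ} (hM : M.PosDef)
    (hP : IsStarProjection P) : (M - P).PosSemidef ↔ (P - P * M⁻¹ * P).PosSemidef := by
  have hPh := hP.isHermitian
  constructor
  · intro h
    refine .of_dotProduct_mulVec_nonneg ?_ fun x => ?_
    · refine hPh.sub ?_
      simpa only [hPh.eq] using isHermitian_conjTranspose_mul_mul P hM.inv.1
    set y := P *ᵥ x
    set u := M⁻¹ *ᵥ y
    have hMu : M *ᵥ u = y := by
      rw [mulVec_mulVec, mul_nonsing_inv M (isUnit_iff_ne_zero.mpr hM.det_pos.ne'), one_mulVec]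
    have hPy : P *ᵥ y = y := by rw [mulVec_mulVec, hP.isIdempotentElem.eq]
    have hyu : y ⬝ᵥ P *ᵥ u = y ⬝ᵥ u := by rw [hPh.dotProduct_mulVec_comm, hPy]
    have hu := h.dotProduct_mulVec_nonneg u
    rw [star_trivial, sub_mulVec, dotProduct_sub, hP.dotProduct_mulVec_self, hMu,
      dotProduct_comm] at hu
    have hsq : 0 ≤ (y - P *ᵥ u) ⬝ᵥ (y - P *ᵥ u) := dotProduct_star_self_nonneg _
    rw [star_trivial, hP.dotProduct_mulVec_sub_mul_mul]
    simp only [dotProduct_sub, sub_dotProduct, dotProduct_comm (P *ᵥ u) y, hyu] at hsq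
    change 0 ≤ y ⬝ᵥ y - y ⬝ᵥ u
    linarith
  · intro h
    refine .of_dotProduct_mulVec_nonneg (hM.1.sub hPh) fun x => ?_
    have hv := h.dotProduct_mulVec_nonneg x
    have hlow := hM.two_mul_dotProduct_sub_le x (P *ᵥ x)
    rw [star_trivial, hP.dotProduct_mulVec_sub_mul_mul] at hv
    rw [star_trivial, sub_mulVec, dotProduct_sub, hP.dotProduct_mulVec_self]
    rw [hP.dotProduct_mulVec_self] at hlow
    linarith

lemma IsStarProjection.sub_mul_mul_eq_conjTranspose_mul_mul {P D N : Matrix n n ℝ}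
    (hP : IsStarProjection P) (hDP : Commute D P) :
    P - P * (1 - Dᴴ * D + Dᴴ * N * D) * P = Dᴴ * (P - P * N * P) * D := by
  have hDP' : Commute Dᴴ P := by
    simpa only [star_eq_conjTranspose, hP.isHermitian.eq] using hDP.star_star
  have hPP : P * P = P := hP.isIdempotentElem.eq
  calc P - P * (1 - Dᴴ * D + Dᴴ * N * D) * P
      = P - P * P + (P * Dᴴ) * (D * P) - (P * Dᴴ) * N * (D * P) := by noncomm_ring
    _ = P - P * P + (Dᴴ * P) * (P * D) - (Dᴴ * P) * N * (P * D) := by rw [← hDP'.eq, hDP.eq]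
    _ = Dᴴ * (P * P) * D - Dᴴ * P * N * P * D + (P - P * P) := by noncomm_ring
    _ = Dᴴ * (P - P * N * P) * D := by rw [hPP]; noncomm_ring

end Matrix

def secondBlockProj (m : ℕ) : Matrix (Fin (2 * m)) (Fin (2 * m)) ℝ :=
  diagonal fun i => if (i : ℕ) < m then 0 else 1

/-- `𝒲^{1/2}`. -/
noncomputable def sqrtWeightDiag {m : ℕ} (w : Fin m → ℝ) : Matrix (Fin (2 * m)) (Fin (2 * m)) ℝ :=
  diagonal fun i => √(wExt w i)

lemma isStarProjection_secondBlockProj (m : ℕ) : IsStarProjection (secondBlockProj m) where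
  isIdempotentElem := by
    rw [IsIdempotentElem, secondBlockProj, diagonal_mul_diagonal]
    congr 1; funext i; split_ifs <;> norm_num
  isSelfAdjoint := isHermitian_diagonal _

lemma half_smul_Zmat (m : ℕ) :
    (1 / 2 : ℝ) • Zmat m = (1 / 2 : ℝ) • 1 - secondBlockProj m := by
  rw [Zmat, secondBlockProj, ← diagonal_one, ← diagonal_smul, ← diagonal_smul, diagonal_sub]
  congr 1; funext i; simp only [Pi.smul_apply, smul_eq_mul]; split_ifs <;> norm_num

lemma wExt_mem {m : ℕ} {w : Fin m → ℝ} {s : Set ℝ} (hw : ∀ k, w k ∈ s) (i : Fin (2 * m)) :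
    wExt w i ∈ s := by
  unfold wExt; split_ifs <;> apply hw

lemma conjTranspose_sqrtWeightDiag {m : ℕ} (w : Fin m → ℝ) :
    (sqrtWeightDiag w)ᴴ = sqrtWeightDiag w :=
  isHermitian_diagonal _

lemma sqrtWeightDiag_mul_self {m : ℕ} {w : Fin m → ℝ} (hw : ∀ k, 0 ≤ w k) :
    sqrtWeightDiag w * sqrtWeightDiag w = diagonal (wExt w) := by
  rw [sqrtWeightDiag, diagonal_mul_diagonal]
  congr 1; funext i; exact Real.mul_self_sqrt (wExt_mem (s := Set.Ici 0) hw i)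

lemma commute_sqrtWeightDiag_secondBlockProj {m : ℕ} (w : Fin m → ℝ) :
    Commute (sqrtWeightDiag w) (secondBlockProj m) :=
  commute_diagonal _ _

theorem weight_update_valid_covariance_general {m : ℕ}
    (V : Matrix (Fin (2 * m)) (Fin (2 * m)) ℝ)
    (hVZ : (V + (1 / 2 : ℝ) • Zmat m).PosSemidef)
    (hVI : (V + (1 / 2 : ℝ) • 1).PosDef)
    (w : Fin m → ℝ) (hw0 : ∀ k, 0 ≤ w k) (hw1 : ∀ k, w k ≤ 1) :
    (Bmat V w).PosDef ∧
      ((-(1 / 2 : ℝ)) • 1 + (Bmat V w)⁻¹ + (1 / 2 : ℝ) • Zmat m).PosSemidef := by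
  set A := V + (1 / 2 : ℝ) • 1
  set P := secondBlockProj m
  set D := sqrtWeightDiag w
  have hP : IsStarProjection P := isStarProjection_secondBlockProj m
  have hZ : (1 / 2 : ℝ) • Zmat m = (1 / 2 : ℝ) • 1 - P := half_smul_Zmat m
  have hDD : Dᴴ * D = diagonal (wExt w) := by
    rw [conjTranspose_sqrtWeightDiag, sqrtWeightDiag_mul_self hw0]
  have hB : Bmat V w = 1 - Dᴴ * D + Dᴴ * A⁻¹ * D := by
    rw [hDD, conjTranspose_sqrtWeightDiag]; rfl
  have hBpos : (Bmat V w).PosDef := by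
    rw [hB]
    refine PosDef.add_conjTranspose_mul_mul ?_ hVI.inv (by simpa using PosDef.one)
    rw [hDD, ← diagonal_one, diagonal_sub]
    exact PosSemidef.diagonal fun i => sub_nonneg.2 (wExt_mem (s := Set.Iic 1) hw1 i)
  refine ⟨hBpos, ?_⟩
  have hA : (P - P * A⁻¹ * P).PosSemidef :=
    (hVI.posSemidef_sub_isStarProjection_iff hP).1 (by rwa [hZ, add_sub_assoc'] at hVZ)
  have hPBP : (P - P * Bmat V w * P).PosSemidef := by
    rw [hB, hP.sub_mul_mul_eq_conjTranspose_mul_mul (commute_sqrtWeightDiag_secondBlockProj w)]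
    exact hA.conjTranspose_mul_mul_same D
  have hBP := (hBpos.inv.posSemidef_sub_isStarProjection_iff hP).2
    (by rwa [nonsing_inv_nonsing_inv _ ((isUnit_iff_isUnit_det _).1 hBpos.isUnit)])
  rw [hZ]
  convert hBP using 1
  rw [neg_smul]
  abel

/-- if `V` is real symmetric with `V + Z/2` positive semidefinite and `V + I/2`
positive definite, and `w_k ∈ [0,1]`, then `B = I − 𝒲 + 𝒲^{1/2}(V + I/2)⁻¹𝒲^{1/2}` is positive
definite and `V_𝒲 = −I/2 + B⁻¹` satisfies `V_𝒲 + Z/2` positive semidefinite. -/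
theorem weight_update_valid_covariance {m : ℕ} (hm : 1 ≤ m)
    (V : Matrix (Fin (2 * m)) (Fin (2 * m)) ℝ) (hV : V.IsSymm)
    (hVZ : (V + (1 / 2 : ℝ) • Zmat m).PosSemidef)
    (hVI : (V + (1 / 2 : ℝ) • 1).PosDef)
    (w : Fin m → ℝ) (hw0 : ∀ k, 0 ≤ w k) (hw1 : ∀ k, w k ≤ 1) :
    (Bmat V w).PosDef ∧
      ((-(1 / 2 : ℝ)) • 1 + (Bmat V w)⁻¹ + (1 / 2 : ℝ) • Zmat m).PosSemidef :=
  weight_update_valid_covariance_general V hVZ hVI w hw0 hw1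
end
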